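/- Let X be a non-singular simplicial set and Φ an n-simplex of X^{Δ[1]} with Φε_k = Φε_{k+1} for some 0 ≤ k < n. Then there is an (n-1)-simplex Ψ of X^{Δ[1]} with Φ = Ψσ_k; in particular Φ is degenerate. -/

import Mathlib

open CategoryTheory Simplicial Opposite MonoidalCategory Limits

/-- The representing map of a simplex is degreewise injective. -/
def SSet.RepInj (X : SSet.{0}) {n : ℕ} (x : X _⦋n⦌) : Prop :=
  ∀ m : SimplexCategoryᵒᵖ, Function.Injective (((SSet.yonedaEquiv (X := X) (n := ⦋n⦌)).symm x).app m)

/-- The `i`-th vertex `x εᵢ` of a simplex. -/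
def SSet.vert (X : SSet.{0}) {n : ℕ} (x : X _⦋n⦌) (i : Fin (n + 1)) : X _⦋0⦌ :=
  X.map (SimplexCategory.const ⦋0⦌ ⦋n⦌ i).op x

/-- A simplex is degenerate if it is obtained from a simplex of strictly
lower degree by the action of an operator. -/
def SSet.IsDegenerate (X : SSet.{0}) {n : ℕ} (x : X _⦋n⦌) : Prop :=
  ∃ (m : ℕ) (_ : m < n) (α : (⦋n⦌ : SimplexCategory) ⟶ ⦋m⦌) (y : X _⦋m⦌),
    X.map α.op y = x

/-- A simplicial set is non-singular if every non-degenerate simplex has a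
degreewise injective representing map. -/
def SSet.NonSingular (X : SSet.{0}) : Prop :=
  ∀ (n : ℕ) (x : X _⦋n⦌), ¬ X.IsDegenerate x → X.RepInj x


/-- The simplicial mapping set `X^K`, whose `n`-simplices are the simplicial
maps `Δ[n] × K → X`. -/
noncomputable def SSet.sHom (K X : SSet.{0}) : SSet.{0} where
  obj m := SSet.stdSimplex.obj m.unop ⊗ K ⟶ X
  map α := TypeCat.ofHom fun f => (SSet.stdSimplex.map α.unop ▷ K) ≫ f
  map_id m := by
    ext f : 3
    simp
    erw [CategoryTheory.Functor.map_id]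
    simp
  map_comp α β := by
    ext f : 3
    simp
    erw [CategoryTheory.Functor.map_comp]
    simp [MonoidalCategory.comp_whiskerRight]

/-!
Let `g = σ_k δ_{k+1}` be the operator collapsing vertex `k + 1` onto `k`. It suffices to show
`Φ ∘ (g × 1) = Φ` (for any `K` in place of `Δ[1]`), since then `Ψ = Φ δ_{k+1}`. On a simplex
`(a, b)` of `Δ[n+1] × K`, the simplices `a` and `g a` differ exactly where `a` takes the value
`k + 1`; changing one index at a time, it is enough to show `Φ (a', b) = Φ (a, b)` when `a'` and
`a` differ only at `j` and `a' j ≤ a j`. Such `a`, `a'` are the faces `d_j θ`, `d_{j+1} θ` of a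
"prism" simplex `θ`, and `x = Φ (θ, s_j b)` has equal `j`-th and `(j+1)`-st vertices. In a
non-singular simplicial set, `x` is an operator applied to a nondegenerate simplex, and that
operator identifies `j` and `j + 1` because nondegenerate simplices are injective on vertices;
hence `d_j x = d_{j+1} x`.
-/

universe u

namespace SimplexCategory

lemma σ_comp_δ_succ_apply {m : ℕ} (j : Fin (m + 1)) (i : Fin (m + 2)) :
    (σ j ≫ δ j.succ).toOrderHom i = if i = j.succ then j.castSucc else i := by
  change j.succ.succAbove (j.predAbove i) = _
  rcases lt_trichotomy i j.succ with hlt | rfl | hgt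
  · rw [if_neg hlt.ne, Fin.predAbove_of_lt_succ _ _ hlt,
      Fin.succAbove_of_castSucc_lt _ _ (by rwa [Fin.castSucc_castPred]), Fin.castSucc_castPred]
  · simp
  · rw [if_neg hgt.ne', Fin.predAbove_of_succ_le _ _ hgt.le,
      Fin.succAbove_of_le_castSucc _ _ ((Fin.le_castSucc_pred_iff _).mpr hgt), Fin.succ_pred]

lemma δ_castSucc_comp_eq_δ_succ_comp {m : ℕ} {Δ' : SimplexCategory} (f : ⦋m + 1⦌ ⟶ Δ')
    (j : Fin (m + 1)) (h : f.toOrderHom j.castSucc = f.toOrderHom j.succ) :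
    δ j.castSucc ≫ f = δ j.succ ≫ f := by
  obtain ⟨g, rfl⟩ := eq_σ_comp_of_not_injective' f j h
  rw [← Category.assoc, ← Category.assoc, δ_comp_σ_self, δ_comp_σ_succ]

end SimplexCategory

namespace SSet

lemma NonSingular.nonsingular {X : SSet.{0}} (hX : X.NonSingular) : X.Nonsingular where
  mono x := by
    rw [NatTrans.mono_iff_mono_app]
    intro m
    rw [mono_iff_injective]
    exact hX _ x.1 x.2 m

lemma Nonsingular.δ_castSucc_eq_δ_succ_of_vertex_eq {X : SSet.{u}} [X.Nonsingular] {m : ℕ}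
    (x : X _⦋m + 1⦌) (j : Fin (m + 1))
    (h : X.map (SimplexCategory.const ⦋0⦌ _ j.castSucc).op x
      = X.map (SimplexCategory.const ⦋0⦌ _ j.succ).op x) :
    X.δ j.castSucc x = X.δ j.succ x := by
  obtain ⟨p, f, _, ⟨y, hy⟩, rfl⟩ := X.exists_nonDegenerate x
  simp only [← Functor.map_comp_apply, ← op_comp, SimplexCategory.const_comp] at h
  have hf := congr_arg (fun g => g.toOrderHom 0) (Nonsingular.injective_map y hy h)
  simp only [SimplexCategory.const_apply] at hf
  change X.map (SimplexCategory.δ _).op (X.map f.op y)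
    = X.map (SimplexCategory.δ _).op (X.map f.op y)
  simp only [← Functor.map_comp_apply, ← op_comp,
    SimplexCategory.δ_castSucc_comp_eq_δ_succ_comp f j hf]

end SSet

namespace SSet.stdSimplex

lemma map_const_op {p m : ℕ} (a : Δ[p] _⦋m⦌) (i : Fin (m + 1)) :
    Δ[p].map (SimplexCategory.const ⦋0⦌ ⦋m⦌ i).op a = obj₀Equiv.symm (a i) := by
  ext j : 1
  rfl

lemma exists_δ_castSucc_eq_and_δ_succ_eq {p m : ℕ} (a a' : Δ[p] _⦋m⦌) (j : Fin (m + 1))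
    (hle : a' j ≤ a j) (heq : ∀ i ≠ j, a' i = a i) :
    ∃ θ : Δ[p] _⦋m + 1⦌, Δ[p].δ j.castSucc θ = a ∧ Δ[p].δ j.succ θ = a' := by
  have hle' (i : Fin (m + 1)) : a' i ≤ a i := by
    obtain rfl | hi := eq_or_ne i j
    exacts [hle, (heq i hi).le]
  let θ : Fin (m + 2) →o Fin (p + 1) :=
    ⟨fun i => if i ≤ j.castSucc then a' (j.predAbove i) else a (j.predAbove i), by
      intro x y hxy
      have hpred := Fin.predAbove_right_monotone j hxy
      dsimp only
      split_ifs with hx hy hy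
      · exact monotone_apply a' hpred
      · exact (hle' _).trans (monotone_apply a hpred)
      · exact absurd (hxy.trans hy) hx
      · exact monotone_apply a hpred⟩
  have hθ (i : Fin (m + 2)) :
      θ i = if i ≤ j.castSucc then a' (j.predAbove i) else a (j.predAbove i) := rfl
  refine ⟨objMk θ, ?_, ?_⟩ <;> ext i : 1 <;> rw [δ_apply, objMk_apply, hθ]
  · rcases lt_or_ge i j with hij | hij
    · rw [Fin.succAbove_of_castSucc_lt _ _ (Fin.castSucc_lt_castSucc_iff.mpr hij),
        if_pos (Fin.castSucc_le_castSucc_iff.mpr hij.le), Fin.predAbove_castSucc_of_le _ _ hij.le,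
        heq i hij.ne]
    · rw [Fin.succAbove_of_le_castSucc _ _ (Fin.castSucc_le_castSucc_iff.mpr hij),
        if_neg (not_le.mpr (Fin.castSucc_lt_succ_iff.mpr hij)), Fin.predAbove_succ_of_le _ _ hij]
  · rcases le_or_gt i j with hij | hij
    · rw [Fin.succAbove_of_castSucc_lt _ _ (Fin.castSucc_lt_succ_iff.mpr hij),
        if_pos (Fin.castSucc_le_castSucc_iff.mpr hij), Fin.predAbove_castSucc_of_le _ _ hij]
    · rw [Fin.succAbove_of_le_castSucc _ _ (Fin.succ_le_castSucc_iff.mpr hij),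
        if_neg (not_le.mpr (Fin.castSucc_lt_succ_iff.mpr hij.le)),
        Fin.predAbove_succ_of_le _ _ hij.le, heq i hij.ne']

variable {p m : ℕ} (a' a : Δ[p] _⦋m⦌) (h : ∀ i, a' i ≤ a i)

def splice (t : ℕ) : Δ[p] _⦋m⦌ :=
  objMk ⟨fun i => if (i : ℕ) < t then a' i else a i, by
    intro x y hxy
    dsimp only
    split_ifs with hx hy hy
    · exact monotone_apply a' hxy
    · exact (h x).trans (monotone_apply a hxy)
    · exact absurd (lt_of_le_of_lt (Fin.le_def.mp hxy) hy) hx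
    · exact monotone_apply a hxy⟩

lemma splice_apply (t : ℕ) (i : Fin (m + 1)) :
    splice a' a h t i = if (i : ℕ) < t then a' i else a i := rfl

lemma splice_zero : splice a' a h 0 = a := by
  ext i
  simp [splice_apply]

lemma splice_of_le {t : ℕ} (ht : m + 1 ≤ t) : splice a' a h t = a' := by
  ext i
  simp [splice_apply, i.isLt.trans_le ht]

end SSet.stdSimplex

namespace SSet.Nonsingular

variable {X K : SSet.{u}} [X.Nonsingular] {p : ℕ} (Φ : Δ[p] ⊗ K ⟶ X)

lemma app_eq_app_of_apply_eq_of_ne {m : ℕ} (a a' : Δ[p] _⦋m⦌) (b : K _⦋m⦌)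
    (j : Fin (m + 1)) (hle : a' j ≤ a j) (heq : ∀ i ≠ j, a' i = a i)
    (hΦ : ∀ c : K _⦋0⦌, Φ.app _ (stdSimplex.obj₀Equiv.symm (a' j), c)
      = Φ.app _ (stdSimplex.obj₀Equiv.symm (a j), c)) :
    Φ.app _ (a', b) = Φ.app _ (a, b) := by
  obtain ⟨θ, hθa, hθa'⟩ := stdSimplex.exists_δ_castSucc_eq_and_δ_succ_eq a a' j hle heq
  have hθ : θ j.castSucc = a' j ∧ θ j.succ = a j := by
    rw [← hθa, ← hθa', stdSimplex.δ_apply, stdSimplex.δ_apply, Fin.succAbove_succ_self,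
      Fin.succAbove_castSucc_self]
    exact ⟨rfl, rfl⟩
  have hvert (i : Fin (m + 2)) :
      X.map (SimplexCategory.const ⦋0⦌ _ i).op (Φ.app _ (θ, K.σ j b))
        = Φ.app _ (stdSimplex.obj₀Equiv.symm (θ i),
            K.map (SimplexCategory.const ⦋0⦌ _ (j.predAbove i)).op b) := by
    refine (NatTrans.naturality_apply Φ _ _).symm.trans (congr_arg (Φ.app _) (Prod.ext ?_ ?_))
    · exact stdSimplex.map_const_op θ i
    · change K.map _ (K.map _ b) = _
      rw [← Functor.map_comp_apply, ← op_comp, SimplexCategory.const_comp]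
      rfl
  have hδ (i : Fin (m + 2)) :
      X.δ i (Φ.app _ (θ, K.σ j b)) = Φ.app _ (Δ[p].δ i θ, K.δ i (K.σ j b)) :=
    (NatTrans.naturality_apply Φ _ _).symm
  have := δ_castSucc_eq_δ_succ_of_vertex_eq (Φ.app _ (θ, K.σ j b)) j (by
    rw [hvert, hvert, Fin.predAbove_castSucc_self, Fin.predAbove_succ_self, hθ.1, hθ.2]
    exact hΦ _)
  rwa [hδ, hδ, hθa, hθa', δ_comp_σ_self_apply,
    δ_comp_σ_succ_apply, eq_comm] at this

lemma app_eq_app_of_le {m : ℕ} (a a' : Δ[p] _⦋m⦌) (b : K _⦋m⦌)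
    (hle : ∀ i, a' i ≤ a i)
    (hΦ : ∀ i (c : K _⦋0⦌), Φ.app _ (stdSimplex.obj₀Equiv.symm (a' i), c)
      = Φ.app _ (stdSimplex.obj₀Equiv.symm (a i), c)) :
    Φ.app _ (a', b) = Φ.app _ (a, b) := by
  suffices ∀ t, Φ.app _ (stdSimplex.splice a' a hle t, b) = Φ.app _ (a, b) by
    simpa only [stdSimplex.splice_of_le a' a hle le_rfl] using this (m + 1)
  intro t
  induction t with
  | zero => rw [stdSimplex.splice_zero]
  | succ t ih =>
    rw [← ih]
    by_cases ht : t < m + 1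
    · apply app_eq_app_of_apply_eq_of_ne Φ _ _ b ⟨t, ht⟩
      · rw [stdSimplex.splice_apply, stdSimplex.splice_apply, if_pos (lt_add_one t),
          if_neg (lt_irrefl t)]
        exact hle _
      · intro i hi
        have : (i : ℕ) ≠ t := fun h => hi (Fin.ext h)
        rw [stdSimplex.splice_apply, stdSimplex.splice_apply]
        simp only [Nat.lt_succ_iff_lt_or_eq, this, or_false]
      · rw [stdSimplex.splice_apply, stdSimplex.splice_apply, if_pos (lt_add_one t),
          if_neg (lt_irrefl t)]
        exact hΦ _
    · rw [stdSimplex.splice_of_le _ _ _ (by omega), stdSimplex.splice_of_le _ _ _ (by omega)]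

end SSet.Nonsingular

namespace SSet

lemma sHom_map_apply {K X : SSet.{0}} {m m' : SimplexCategoryᵒᵖ} (f : m ⟶ m')
    (Φ : (sHom K X).obj m) :
    (sHom K X).map f Φ = (SSet.stdSimplex.map f.unop ▷ K ≫ Φ : _ ⟶ X) := rfl

lemma sHom_map_σ_comp_δ_succ_eq_self {K X : SSet.{0}} [X.Nonsingular] {n : ℕ}
    (Φ : (sHom K X) _⦋n + 1⦌) (k : Fin (n + 1))
    (h : (sHom K X).vert Φ k.castSucc = (sHom K X).vert Φ k.succ) :
    (sHom K X).map (SimplexCategory.σ k ≫ SimplexCategory.δ k.succ).op Φ = Φ := by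
  have hvert (c : K _⦋0⦌) :
      Φ.app _ (stdSimplex.obj₀Equiv.symm k.castSucc, c)
        = Φ.app _ (stdSimplex.obj₀Equiv.symm k.succ, c) :=
    congr_arg (fun ψ : Δ[0] ⊗ K ⟶ X => ψ.app _ (stdSimplex.obj₀Equiv.symm 0, c)) h
  rw [sHom_map_apply]
  apply NatTrans.ext
  funext ⟨m⟩
  refine ConcreteCategory.hom_ext _ _ (fun ⟨a, b⟩ => ?_)
  induction m using SimplexCategory.rec with | _ m
  have hg (i : Fin (m + 1)) :
      (SSet.stdSimplex.map (SimplexCategory.σ k ≫ SimplexCategory.δ k.succ)).app _ a i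
        = if a i = k.succ then k.castSucc else a i :=
    SimplexCategory.σ_comp_δ_succ_apply k (a i)
  refine Nonsingular.app_eq_app_of_le Φ a
    ((SSet.stdSimplex.map (SimplexCategory.σ k ≫ SimplexCategory.δ k.succ)).app _ a) b
    (fun i => ?_) (fun i c => ?_)
  · rw [hg]
    split_ifs with hi
    · exact hi ▸ Fin.castSucc_le_succ k
    · exact le_rfl
  · rw [hg]
    split_ifs with hi
    · rw [hi]
      exact hvert c
    · rfl

end SSet

/-- Let `X` be a non-singular simplicial set and `Φ` an
`(n+1)`-simplex of `X^{Δ[1]}` with `Φ ε_k = Φ ε_{k+1}` for some `k`.  Then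
there is an `n`-simplex `Ψ` of `X^{Δ[1]}` with `Φ = Ψ σ_k`; in particular `Φ`
is degenerate. -/
theorem exists_sigma_preimage (X : SSet.{0}) (hX : X.NonSingular) {n : ℕ}
    (Φ : (SSet.sHom Δ[1] X) _⦋n + 1⦌) (k : Fin (n + 1))
    (h : (SSet.sHom Δ[1] X).vert Φ k.castSucc = (SSet.sHom Δ[1] X).vert Φ k.succ) :
    (∃ Ψ : (SSet.sHom Δ[1] X) _⦋n⦌,
        (SSet.sHom Δ[1] X).map (SimplexCategory.σ k).op Ψ = Φ) ∧
      (SSet.sHom Δ[1] X).IsDegenerate Φ := by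
  have := hX.nonsingular
  have hΨ : (SSet.sHom Δ[1] X).map (SimplexCategory.σ k).op
      ((SSet.sHom Δ[1] X).map (SimplexCategory.δ k.succ).op Φ) = Φ := by
    rw [← Functor.map_comp_apply, ← op_comp]
    exact SSet.sHom_map_σ_comp_δ_succ_eq_self Φ k h
  exact ⟨⟨_, hΨ⟩, n, n.lt_succ_self, _, _, hΨ⟩
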